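/- In the first Grigorchuk group G = ⟨a, b, c, d⟩ acting on the infinite binary rooted tree, if g stabilizes the first level of the tree with restrictions (g₀, g₁), then the word length of each gᵢ (with respect to {a,b,c,d}) is at most (l(g)+1)/2, where l(g) is the word length of g. -/
import Mathlib


/-- The generator `a` of the first Grigorchuk group: flips the first letter. -/
def aMap : List Bool → List Bool
  | [] => []
  | x :: t => (!x) :: t

mutual
/-- The generator `b = (a, c)`. -/
def bMap : List Bool → List Bool
  | [] => []
  | false :: t => false :: aMap t
  | true :: t => true :: cMap t
/-- The generator `c = (a, d)`. -/
def cMap : List Bool → List Bool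
  | [] => []
  | false :: t => false :: aMap t
  | true :: t => true :: dMap t
/-- The generator `d = (1, b)`. -/
def dMap : List Bool → List Bool
  | [] => []
  | false :: t => false :: t
  | true :: t => true :: bMap t
end

/-- The generating set {a, b, c, d} of the first Grigorchuk group. -/
def GrigGen : Set (List Bool → List Bool) := {aMap, bMap, cMap, dMap}

/-- `g` is a product of `n` generators from {a,b,c,d}. -/
def IsWord (g : List Bool → List Bool) (n : ℕ) : Prop :=
  ∃ w : List (List Bool → List Bool), w.length = n ∧ (∀ f ∈ w, f ∈ GrigGen) ∧
    w.foldr (· ∘ ·) id = g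

abbrev F := List Bool → List Bool

def fold (w : List F) : F := w.foldr (· ∘ ·) id

lemma aa (t : List Bool) : aMap (aMap t) = t := by
  cases t <;> simp [aMap]

lemma klein (t : List Bool) :
    bMap (bMap t) = t ∧ cMap (cMap t) = t ∧ dMap (dMap t) = t ∧
    bMap (cMap t) = dMap t ∧ cMap (bMap t) = dMap t ∧
    bMap (dMap t) = cMap t ∧ dMap (bMap t) = cMap t ∧
    cMap (dMap t) = bMap t ∧ dMap (cMap t) = bMap t := by
  induction t with
  | nil => simp [bMap, cMap, dMap]
  | cons x t ih =>
    obtain ⟨h1,h2,h3,h4,h5,h6,h7,h8,h9⟩ := ih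
    cases x <;> simp [bMap, cMap, dMap, aa, h1,h2,h3,h4,h5,h6,h7,h8,h9]

def Good (w : List F) (e : Bool) (w₀ w₁ : List F) : Prop :=
  (∀ f ∈ w₀, f ∈ GrigGen) ∧ (∀ f ∈ w₁, f ∈ GrigGen) ∧
  ∀ x t, fold w (x :: t) = (xor x e) :: fold (if x then w₁ else w₀) t

lemma good_nil : Good [] false [] [] := by
  refine ⟨by simp, by simp, fun x t => ?_⟩
  cases x <;> rfl

lemma fold_cons (f : F) (w : List F) (l : List Bool) :
    fold (f :: w) l = f (fold w l) := rfl

lemma good_congr {w w' : List F} (h : ∀ l, fold w l = fold w' l) {e w₀ w₁}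
    (hg : Good w' e w₀ w₁) : Good w e w₀ w₁ :=
  ⟨hg.1, hg.2.1, fun x t => (h _).trans (hg.2.2 x t)⟩

lemma prepend_a {w e w₀ w₁} (hg : Good w e w₀ w₁) : Good (aMap :: w) (!e) w₀ w₁ := by
  refine ⟨hg.1, hg.2.1, fun x t => ?_⟩
  rw [fold_cons, hg.2.2 x t]
  cases x <;> cases e <;> rfl

lemma prepend_b {w e w₀ w₁} (hg : Good w e w₀ w₁) :
    Good (bMap :: w) e ((if e then cMap else aMap) :: w₀) ((if e then aMap else cMap) :: w₁) := by
  refine ⟨?_, ?_, fun x t => ?_⟩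
  · intro f hf; rcases List.mem_cons.1 hf with h | h
    · subst h; cases e <;> simp [GrigGen]
    · exact hg.1 f h
  · intro f hf; rcases List.mem_cons.1 hf with h | h
    · subst h; cases e <;> simp [GrigGen]
    · exact hg.2.1 f h
  · rw [fold_cons, hg.2.2 x t]
    cases x <;> cases e <;> rfl

lemma prepend_c {w e w₀ w₁} (hg : Good w e w₀ w₁) :
    Good (cMap :: w) e ((if e then dMap else aMap) :: w₀) ((if e then aMap else dMap) :: w₁) := by
  refine ⟨?_, ?_, fun x t => ?_⟩
  · intro f hf; rcases List.mem_cons.1 hf with h | h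
    · subst h; cases e <;> simp [GrigGen]
    · exact hg.1 f h
  · intro f hf; rcases List.mem_cons.1 hf with h | h
    · subst h; cases e <;> simp [GrigGen]
    · exact hg.2.1 f h
  · rw [fold_cons, hg.2.2 x t]
    cases x <;> cases e <;> rfl

lemma prepend_d {w e w₀ w₁} (hg : Good w e w₀ w₁) :
    Good (dMap :: w) e (if e then bMap :: w₀ else w₀) (if e then w₁ else bMap :: w₁) := by
  refine ⟨?_, ?_, fun x t => ?_⟩
  · intro f hf; cases e <;> simp at hf
    · exact hg.1 f hf
    · rcases hf with h | h
      · subst h; simp [GrigGen]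
      · exact hg.1 f h
  · intro f hf; cases e <;> simp at hf
    · rcases hf with h | h
      · subst h; simp [GrigGen]
      · exact hg.2.1 f h
    · exact hg.2.1 f hf
  · rw [fold_cons, hg.2.2 x t]
    cases x <;> cases e <;> rfl

lemma mem_grig {f : F} (h : f ∈ GrigGen) :
    f = aMap ∨ f = bMap ∨ f = cMap ∨ f = dMap := by
  simpa [GrigGen] using h

lemma main : ∀ n (w : List F), w.length = n → (∀ f ∈ w, f ∈ GrigGen) →
    ∃ e w₀ w₁, w₀.length ≤ (n+1)/2 ∧ w₁.length ≤ (n+1)/2 ∧ Good w e w₀ w₁ := by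
  intro n
  induction n using Nat.strong_induction_on with
  | _ n IH =>
    intro w hlen hmem
    match w, hlen with
    | [], hlen =>
      exact ⟨false, [], [], by simp, by simp, good_nil⟩
    | [f], hlen =>
      have hf := mem_grig (hmem f (by simp))
      subst hlen
      rcases hf with h | h | h | h <;> subst h
      · exact ⟨true, [], [], by simp, by simp, prepend_a good_nil⟩
      · exact ⟨false, [aMap], [cMap], by simp, by simp, prepend_b good_nil⟩
      · exact ⟨false, [aMap], [dMap], by simp, by simp, prepend_c good_nil⟩
      · exact ⟨false, [], [bMap], by simp, by simp, prepend_d good_nil⟩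
    | f1 :: f2 :: rest, hlen =>
      have hn : n = rest.length + 2 := by simp at hlen; omega
      subst hn
      have hf1 := mem_grig (hmem f1 (by simp))
      have hf2 := mem_grig (hmem f2 (by simp))
      rcases hf1 with h1 | h1 | h1 | h1
      · -- f1 = a
        subst h1
        obtain ⟨e, w₀, w₁, l0, l1, hgood⟩ :=
          IH (rest.length + 1) (by omega) (f2 :: rest) (by simp)
            (fun f hf => hmem f (by simp [hf]))
        exact ⟨!e, w₀, w₁, by omega, by omega, prepend_a hgood⟩
      · -- f1 = b
        subst h1
        rcases hf2 with h2 | h2 | h2 | h2 <;> subst h2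
        · obtain ⟨e, w₀, w₁, l0, l1, hgood⟩ :=
            IH rest.length (by omega) rest rfl
              (fun f hf => hmem f (by simp [hf]))
          refine ⟨!e, _, _, ?_, ?_, prepend_b (prepend_a hgood)⟩ <;>
            · simp only [List.length_cons]; omega
        · obtain ⟨e, w₀, w₁, l0, l1, hgood⟩ :=
            IH rest.length (by omega) rest rfl
              (fun f hf => hmem f (by simp [hf]))
          exact ⟨e, w₀, w₁, by omega, by omega,
            good_congr (fun l => by rw [fold_cons, fold_cons, (klein _).1]) hgood⟩
        · obtain ⟨e, w₀, w₁, l0, l1, hgood⟩ :=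
            IH (rest.length + 1) (by omega) (dMap :: rest) (by simp)
              (fun f hf => by
                rcases List.mem_cons.1 hf with h | h
                · subst h; simp [GrigGen]
                · exact hmem f (by simp [h]))
          exact ⟨e, w₀, w₁, by omega, by omega,
            good_congr (fun l => by rw [fold_cons, fold_cons, fold_cons, (klein _).2.2.2.1]) hgood⟩
        · obtain ⟨e, w₀, w₁, l0, l1, hgood⟩ :=
            IH (rest.length + 1) (by omega) (cMap :: rest) (by simp)
              (fun f hf => by
                rcases List.mem_cons.1 hf with h | h
                · subst h; simp [GrigGen]
                · exact hmem f (by simp [h]))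
          exact ⟨e, w₀, w₁, by omega, by omega,
            good_congr (fun l => by rw [fold_cons, fold_cons, fold_cons, (klein _).2.2.2.2.2.1]) hgood⟩
      · -- f1 = c
        subst h1
        rcases hf2 with h2 | h2 | h2 | h2 <;> subst h2
        · obtain ⟨e, w₀, w₁, l0, l1, hgood⟩ :=
            IH rest.length (by omega) rest rfl
              (fun f hf => hmem f (by simp [hf]))
          refine ⟨!e, _, _, ?_, ?_, prepend_c (prepend_a hgood)⟩ <;>
            · simp only [List.length_cons]; omega
        · obtain ⟨e, w₀, w₁, l0, l1, hgood⟩ :=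
            IH (rest.length + 1) (by omega) (dMap :: rest) (by simp)
              (fun f hf => by
                rcases List.mem_cons.1 hf with h | h
                · subst h; simp [GrigGen]
                · exact hmem f (by simp [h]))
          exact ⟨e, w₀, w₁, by omega, by omega,
            good_congr (fun l => by rw [fold_cons, fold_cons, fold_cons, (klein _).2.2.2.2.1]) hgood⟩
        · obtain ⟨e, w₀, w₁, l0, l1, hgood⟩ :=
            IH rest.length (by omega) rest rfl
              (fun f hf => hmem f (by simp [hf]))
          exact ⟨e, w₀, w₁, by omega, by omega,
            good_congr (fun l => by rw [fold_cons, fold_cons, (klein _).2.1]) hgood⟩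
        · obtain ⟨e, w₀, w₁, l0, l1, hgood⟩ :=
            IH (rest.length + 1) (by omega) (bMap :: rest) (by simp)
              (fun f hf => by
                rcases List.mem_cons.1 hf with h | h
                · subst h; simp [GrigGen]
                · exact hmem f (by simp [h]))
          exact ⟨e, w₀, w₁, by omega, by omega,
            good_congr (fun l => by rw [fold_cons, fold_cons, fold_cons, (klein _).2.2.2.2.2.2.2.1]) hgood⟩
      · -- f1 = d
        subst h1
        rcases hf2 with h2 | h2 | h2 | h2 <;> subst h2
        · obtain ⟨e, w₀, w₁, l0, l1, hgood⟩ :=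
            IH rest.length (by omega) rest rfl
              (fun f hf => hmem f (by simp [hf]))
          refine ⟨!e, _, _, ?_, ?_, prepend_d (prepend_a hgood)⟩ <;>
            · split <;> (try simp only [List.length_cons]) <;> omega
        · obtain ⟨e, w₀, w₁, l0, l1, hgood⟩ :=
            IH (rest.length + 1) (by omega) (cMap :: rest) (by simp)
              (fun f hf => by
                rcases List.mem_cons.1 hf with h | h
                · subst h; simp [GrigGen]
                · exact hmem f (by simp [h]))
          exact ⟨e, w₀, w₁, by omega, by omega,
            good_congr (fun l => by rw [fold_cons, fold_cons, fold_cons, (klein _).2.2.2.2.2.2.1]) hgood⟩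
        · obtain ⟨e, w₀, w₁, l0, l1, hgood⟩ :=
            IH (rest.length + 1) (by omega) (bMap :: rest) (by simp)
              (fun f hf => by
                rcases List.mem_cons.1 hf with h | h
                · subst h; simp [GrigGen]
                · exact hmem f (by simp [h]))
          exact ⟨e, w₀, w₁, by omega, by omega,
            good_congr (fun l => by rw [fold_cons, fold_cons, fold_cons, (klein _).2.2.2.2.2.2.2.2]) hgood⟩
        · obtain ⟨e, w₀, w₁, l0, l1, hgood⟩ :=
            IH rest.length (by omega) rest rfl
              (fun f hf => hmem f (by simp [hf]))
          exact ⟨e, w₀, w₁, by omega, by omega,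
            good_congr (fun l => by rw [fold_cons, fold_cons, (klein _).2.2.1]) hgood⟩


/-- If `g` is given by a word of length `n` in the generators of the first Grigorchuk
group and stabilizes the first level, with restrictions `g₀, g₁`, then each restriction
is given by a word of length at most `(n+1)/2`. -/
theorem grigorchuk_reduction (g g₀ g₁ : List Bool → List Bool) (n : ℕ)
    (hg : IsWord g n)
    (h₀ : ∀ t, g (false :: t) = false :: g₀ t)
    (h₁ : ∀ t, g (true :: t) = true :: g₁ t) :
    (∃ m ≤ (n + 1) / 2, IsWord g₀ m) ∧ ∃ m ≤ (n + 1) / 2, IsWord g₁ m := by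
  obtain ⟨w, hlen, hmem, hfold⟩ := hg
  obtain ⟨e, w₀, w₁, l0, l1, m0, m1, hsem⟩ := main n w hlen hmem
  have hw : fold w = g := hfold
  have key0 : ∀ t, g₀ t = fold w₀ t := by
    intro t
    have h2 : (false : Bool) :: g₀ t = ((false : Bool) ^^ e) :: fold w₀ t := by
      rw [← h₀ t, ← hw]; simpa using hsem false t
    simp only [List.cons.injEq] at h2
    exact h2.2
  have key1 : ∀ t, g₁ t = fold w₁ t := by
    intro t
    have h2 : (true : Bool) :: g₁ t = ((true : Bool) ^^ e) :: fold w₁ t := by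
      rw [← h₁ t, ← hw]; simpa using hsem true t
    simp only [List.cons.injEq] at h2
    exact h2.2
  constructor
  · exact ⟨w₀.length, l0, w₀, rfl, m0, funext fun t => (key0 t).symm⟩
  · exact ⟨w₁.length, l1, w₁, rfl, m1, funext fun t => (key1 t).symm⟩
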